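/- arXiv:2009.00464 — 14 statements merged into one kernel-verified Lean document; each statement's English description precedes it below -/
import Mathlib

section
/- Let A ∈ B(E,F) have generalized inverse A⁺, and let T ∈ B(E,F) satisfy ‖T − A‖ < ‖A⁺‖⁻¹. Then the operators C = I_F + (T − A)A⁺ and D = I_E + A⁺(T − A) are invertible in B(F) and B(E), respectively, and A⁺ C⁻¹ = D⁻¹ A⁺. -/
theorem stmt_1 {E F : Type*} [NormedAddCommGroup E] [NormedSpace ℝ E] [CompleteSpace E]
    [NormedAddCommGroup F] [NormedSpace ℝ F] [CompleteSpace F]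
    (A T : E →L[ℝ] F) (Ap : F →L[ℝ] E)
    (h1 : A ∘L Ap ∘L A = A) (h2 : Ap ∘L A ∘L Ap = Ap)
    (hT : ‖T - A‖ < ‖Ap‖⁻¹) :
    IsUnit ((1 : F →L[ℝ] F) + (T - A) ∘L Ap) ∧
    IsUnit ((1 : E →L[ℝ] E) + Ap ∘L (T - A)) ∧
    Ap ∘L Ring.inverse ((1 : F →L[ℝ] F) + (T - A) ∘L Ap) =
      Ring.inverse ((1 : E →L[ℝ] E) + Ap ∘L (T - A)) ∘L Ap := by
  have hAp : 0 < ‖Ap‖ := by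
    rcases (norm_nonneg Ap).lt_or_eq with h | h
    · exact h
    · exfalso
      rw [← h] at hT
      simp at hT
      exact absurd hT (not_lt.2 (norm_nonneg _))
  have hmul : ‖T - A‖ * ‖Ap‖ < 1 := by
    have := mul_lt_mul_of_pos_right hT hAp
    rwa [inv_mul_cancel₀ hAp.ne'] at this
  have hC : ‖(T - A) ∘L Ap‖ < 1 :=
    lt_of_le_of_lt (ContinuousLinearMap.opNorm_comp_le _ _) hmul
  have hD : ‖Ap ∘L (T - A)‖ < 1 := by
    refine lt_of_le_of_lt (ContinuousLinearMap.opNorm_comp_le _ _) ?_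
    rwa [mul_comm]
  have hu1 : IsUnit ((1 : F →L[ℝ] F) + (T - A) ∘L Ap) := by
    have := (Units.oneSub (-((T - A) ∘L Ap)) (by rwa [norm_neg])).isUnit
    rwa [Units.val_oneSub, sub_neg_eq_add] at this
  have hu2 : IsUnit ((1 : E →L[ℝ] E) + Ap ∘L (T - A)) := by
    have := (Units.oneSub (-(Ap ∘L (T - A))) (by rwa [norm_neg])).isUnit
    rwa [Units.val_oneSub, sub_neg_eq_add] at this
  refine ⟨hu1, hu2, ?_⟩
  set C : F →L[ℝ] F := (1 : F →L[ℝ] F) + (T - A) ∘L Ap with hCdef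
  set D : E →L[ℝ] E := (1 : E →L[ℝ] E) + Ap ∘L (T - A) with hDdef
  set c := Ring.inverse C
  set d := Ring.inverse D
  have key : Ap ∘L C = D ∘L Ap := by
    ext x; simp [hCdef, hDdef]
  have hCC : C ∘L c = 1 := by
    rw [← ContinuousLinearMap.mul_def]
    exact Ring.mul_inverse_cancel _ hu1
  have hDD : d ∘L D = 1 := by
    rw [← ContinuousLinearMap.mul_def]
    exact Ring.inverse_mul_cancel _ hu2
  calc Ap ∘L c = (d ∘L D) ∘L (Ap ∘L c) := by rw [hDD]; ext x; simp
    _ = d ∘L ((Ap ∘L C) ∘L c) := by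
        conv_rhs => rw [key]
        ext x; simp
    _ = d ∘L (Ap ∘L (C ∘L c)) := by ext x; simp
    _ = d ∘L Ap := by rw [hCC]; ext x; simp
end

section
/- Let A ∈ B(E,F) have generalized inverse A⁺ and let T ∈ B(E,F) with ‖T − A‖ < ‖A⁺‖⁻¹. If R(T) ∩ N(A⁺) = {0}, then B := A⁺ (I_F + (T−A)A⁺)⁻¹ is a generalized inverse of T (i.e., T B T = T and B T B = B) with R(B) = R(A⁺) and N(B) = N(A⁺). -/
/-!
Write `C = 1 + (T - A) A⁺` and `B = A⁺ C⁻¹`. Since `A⁺ A A⁺ = A⁺`, one has `C A A⁺ = T A⁺`, so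
`C⁻¹ T A⁺ = A A⁺` and `B T B = A⁺ A A⁺ C⁻¹ = B` without any assumption on `T`. For `T B T = T`
it suffices that `A A⁺` fixes `z = C⁻¹ T x`: expanding `C z = T x` gives
`z - A A⁺ z = T (x - A⁺ z)`, which also lies in `N(A⁺)`, hence vanishes by `R(T) ∩ N(A⁺) = 0`.
Finally `C` is the identity on `N(A⁺)`, so `C⁻¹` is too, which gives `N(B) = N(A⁺)`; and `C` is
invertible by the Neumann series, as `‖(T - A) A⁺‖ < 1`.
-/

open ContinuousLinearMap

section Algebra

variable {R M N : Type*} [Ring R] [AddCommGroup M] [Module R M] [TopologicalSpace M]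
  [AddCommGroup N] [Module R N] [TopologicalSpace N] [IsTopologicalAddGroup N]

namespace ContinuousLinearMap

theorem ringInverse_apply_apply {f : N →L[R] N} (hf : IsUnit f) (y : N) :
    Ring.inverse f (f y) = y :=
  congr($(Ring.inverse_mul_cancel f hf) y)

theorem apply_ringInverse_apply {f : N →L[R] N} (hf : IsUnit f) (y : N) :
    f (Ring.inverse f y) = y :=
  congr($(Ring.mul_inverse_cancel f hf) y)

end ContinuousLinearMap

/-- The operator `C_A(A⁺, T)` of the paper. -/
def perturbationFactor (A : M →L[R] N) (Ap : N →L[R] M) (T : M →L[R] N) : N →L[R] N :=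
  1 + (T - A) ∘L Ap

noncomputable def perturbedGenInverse (A : M →L[R] N) (Ap : N →L[R] M) (T : M →L[R] N) :
    N →L[R] M :=
  Ap ∘L Ring.inverse (perturbationFactor A Ap T)

variable {A T : M →L[R] N} {Ap : N →L[R] M}

theorem perturbationFactor_apply_of_map_eq_zero {y : N} (hy : Ap y = 0) :
    perturbationFactor A Ap T y = y := by
  simp [perturbationFactor, hy]

theorem ringInverse_perturbationFactor_apply_of_map_eq_zero
    (hu : IsUnit (perturbationFactor A Ap T)) {y : N} (hy : Ap y = 0) :
    Ring.inverse (perturbationFactor A Ap T) y = y := by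
  conv_lhs => rw [← perturbationFactor_apply_of_map_eq_zero (A := A) (T := T) hy]
  exact ringInverse_apply_apply hu y

theorem perturbationFactor_comp_comp (h2 : Ap ∘L A ∘L Ap = Ap) :
    perturbationFactor A Ap T ∘L A ∘L Ap = T ∘L Ap := by
  ext y
  have hy : Ap (A (Ap y)) = Ap y := congr($h2 y)
  simp [perturbationFactor, hy]

theorem ringInverse_perturbationFactor_comp_comp (hu : IsUnit (perturbationFactor A Ap T))
    (h2 : Ap ∘L A ∘L Ap = Ap) :
    Ring.inverse (perturbationFactor A Ap T) ∘L T ∘L Ap = A ∘L Ap := by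
  rw [← perturbationFactor_comp_comp h2]
  exact Ring.inverse_mul_cancel_left _ (A ∘L Ap) hu

theorem comp_comp_ringInverse_perturbationFactor_comp (hu : IsUnit (perturbationFactor A Ap T))
    (h2 : Ap ∘L A ∘L Ap = Ap)
    (hR : LinearMap.range (T : M →ₗ[R] N) ⊓ LinearMap.ker (Ap : N →ₗ[R] M) = ⊥) :
    A ∘L Ap ∘L Ring.inverse (perturbationFactor A Ap T) ∘L T =
      Ring.inverse (perturbationFactor A Ap T) ∘L T := by
  ext x
  set z := Ring.inverse (perturbationFactor A Ap T) (T x)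
  have hCz : z + (T - A) (Ap z) = T x := apply_ringInverse_apply hu (T x)
  have hz : Ap (A (Ap z)) = Ap z := congr($h2 z)
  have hmem : z - A (Ap z) ∈
      LinearMap.range (T : M →ₗ[R] N) ⊓ LinearMap.ker (Ap : N →ₗ[R] M) := by
    refine ⟨⟨x - Ap z, ?_⟩, ?_⟩
    · simp only [coe_coe, map_sub, ← hCz, sub_apply]
      abel
    · simp [hz]
  rw [hR, Submodule.mem_bot, sub_eq_zero] at hmem
  exact hmem.symm

theorem comp_perturbedGenInverse_comp (hu : IsUnit (perturbationFactor A Ap T))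
    (h2 : Ap ∘L A ∘L Ap = Ap)
    (hR : LinearMap.range (T : M →ₗ[R] N) ⊓ LinearMap.ker (Ap : N →ₗ[R] M) = ⊥) :
    T ∘L perturbedGenInverse A Ap T ∘L T = T := by
  set C := perturbationFactor A Ap T
  calc T ∘L perturbedGenInverse A Ap T ∘L T = (T ∘L Ap) ∘L Ring.inverse C ∘L T := rfl
    _ = C ∘L (A ∘L Ap ∘L Ring.inverse C ∘L T) := by rw [← perturbationFactor_comp_comp h2]; rfl
    _ = (C * Ring.inverse C) ∘L T := by
        rw [comp_comp_ringInverse_perturbationFactor_comp hu h2 hR]; rfl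
    _ = T := by rw [Ring.mul_inverse_cancel C hu]; rfl

theorem perturbedGenInverse_comp_comp (hu : IsUnit (perturbationFactor A Ap T))
    (h2 : Ap ∘L A ∘L Ap = Ap) :
    perturbedGenInverse A Ap T ∘L T ∘L perturbedGenInverse A Ap T = perturbedGenInverse A Ap T := by
  set C := perturbationFactor A Ap T
  calc perturbedGenInverse A Ap T ∘L T ∘L perturbedGenInverse A Ap T
      = Ap ∘L (Ring.inverse C ∘L T ∘L Ap) ∘L Ring.inverse C := rfl
    _ = (Ap ∘L A ∘L Ap) ∘L Ring.inverse C := by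
        rw [ringInverse_perturbationFactor_comp_comp hu h2]; rfl
    _ = perturbedGenInverse A Ap T := by rw [h2]; rfl

theorem range_perturbedGenInverse (hu : IsUnit (perturbationFactor A Ap T)) :
    LinearMap.range (perturbedGenInverse A Ap T : N →ₗ[R] M) =
      LinearMap.range (Ap : N →ₗ[R] M) :=
  LinearMap.range_comp_of_range_eq_top _ <| LinearMap.range_eq_top.2 fun y =>
    ⟨perturbationFactor A Ap T y, ringInverse_apply_apply hu y⟩

theorem ker_perturbedGenInverse (hu : IsUnit (perturbationFactor A Ap T)) :
    LinearMap.ker (perturbedGenInverse A Ap T : N →ₗ[R] M) = LinearMap.ker (Ap : N →ₗ[R] M) := by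
  ext y
  simp only [LinearMap.mem_ker, coe_coe, perturbedGenInverse, comp_apply]
  constructor
  · intro hy
    rwa [← apply_ringInverse_apply hu y, perturbationFactor_apply_of_map_eq_zero hy]
  · intro hy
    rwa [ringInverse_perturbationFactor_apply_of_map_eq_zero hu hy]

end Algebra

theorem isUnit_perturbationFactor {𝕜 E F : Type*} [NontriviallyNormedField 𝕜]
    [NormedAddCommGroup E] [NormedSpace 𝕜 E] [NormedAddCommGroup F] [NormedSpace 𝕜 F]
    [CompleteSpace F] {A T : E →L[𝕜] F} {Ap : F →L[𝕜] E} (hT : ‖T - A‖ < ‖Ap‖⁻¹) :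
    IsUnit (perturbationFactor A Ap T) := by
  have hAp : 0 < ‖Ap‖ := (norm_nonneg Ap).lt_of_ne' fun h => by
    rw [h, inv_zero] at hT
    exact (norm_nonneg _).not_gt hT
  have hS : ‖-((T - A) ∘L Ap)‖ < 1 :=
    calc ‖-((T - A) ∘L Ap)‖ ≤ ‖T - A‖ * ‖Ap‖ := (norm_neg _).trans_le (opNorm_comp_le _ _)
      _ < ‖Ap‖⁻¹ * ‖Ap‖ := mul_lt_mul_of_pos_right hT hAp
      _ = 1 := inv_mul_cancel₀ hAp.ne'
  have hu := (Units.oneSub _ hS).isUnit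
  rwa [Units.val_oneSub, sub_neg_eq_add] at hu

theorem stmt_2_general {E F : Type*} [NormedAddCommGroup E] [NormedSpace ℝ E]
    [NormedAddCommGroup F] [NormedSpace ℝ F] [CompleteSpace F]
    (A T : E →L[ℝ] F) (Ap : F →L[ℝ] E)
    (h2 : Ap ∘L A ∘L Ap = Ap)
    (hT : ‖T - A‖ < ‖Ap‖⁻¹)
    (hR : LinearMap.range (T : E →ₗ[ℝ] F) ⊓ LinearMap.ker (Ap : F →ₗ[ℝ] E) = ⊥) :
    T ∘L (Ap ∘L Ring.inverse ((1 : F →L[ℝ] F) + (T - A) ∘L Ap)) ∘L T = T ∧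
    (Ap ∘L Ring.inverse ((1 : F →L[ℝ] F) + (T - A) ∘L Ap)) ∘L T ∘L
      (Ap ∘L Ring.inverse ((1 : F →L[ℝ] F) + (T - A) ∘L Ap)) =
      Ap ∘L Ring.inverse ((1 : F →L[ℝ] F) + (T - A) ∘L Ap) ∧
    LinearMap.range ((Ap ∘L Ring.inverse ((1 : F →L[ℝ] F) + (T - A) ∘L Ap)) : F →ₗ[ℝ] E) =
      LinearMap.range (Ap : F →ₗ[ℝ] E) ∧
    LinearMap.ker ((Ap ∘L Ring.inverse ((1 : F →L[ℝ] F) + (T - A) ∘L Ap)) : F →ₗ[ℝ] E) =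
      LinearMap.ker (Ap : F →ₗ[ℝ] E) := by
  have hu := isUnit_perturbationFactor hT
  exact ⟨comp_perturbedGenInverse_comp hu h2 hR, perturbedGenInverse_comp_comp hu h2,
    range_perturbedGenInverse hu, ker_perturbedGenInverse hu⟩

theorem stmt_2 {E F : Type*} [NormedAddCommGroup E] [NormedSpace ℝ E] [CompleteSpace E]
    [NormedAddCommGroup F] [NormedSpace ℝ F] [CompleteSpace F]
    (A T : E →L[ℝ] F) (Ap : F →L[ℝ] E)
    (h1 : A ∘L Ap ∘L A = A) (h2 : Ap ∘L A ∘L Ap = Ap)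
    (hT : ‖T - A‖ < ‖Ap‖⁻¹)
    (hR : LinearMap.range (T : E →ₗ[ℝ] F) ⊓ LinearMap.ker (Ap : F →ₗ[ℝ] E) = ⊥) :
    T ∘L (Ap ∘L Ring.inverse ((1 : F →L[ℝ] F) + (T - A) ∘L Ap)) ∘L T = T ∧
    (Ap ∘L Ring.inverse ((1 : F →L[ℝ] F) + (T - A) ∘L Ap)) ∘L T ∘L
      (Ap ∘L Ring.inverse ((1 : F →L[ℝ] F) + (T - A) ∘L Ap)) =
      Ap ∘L Ring.inverse ((1 : F →L[ℝ] F) + (T - A) ∘L Ap) ∧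
    LinearMap.range ((Ap ∘L Ring.inverse ((1 : F →L[ℝ] F) + (T - A) ∘L Ap)) : F →ₗ[ℝ] E) =
      LinearMap.range (Ap : F →ₗ[ℝ] E) ∧
    LinearMap.ker ((Ap ∘L Ring.inverse ((1 : F →L[ℝ] F) + (T - A) ∘L Ap)) : F →ₗ[ℝ] E) =
      LinearMap.ker (Ap : F →ₗ[ℝ] E) :=
  stmt_2_general A T Ap h2 hT hR
end

section
/- Let A ∈ B(E,F) have generalized inverse A⁺ and let T ∈ B(E,F) with ‖T − A‖ < ‖A⁺‖⁻¹. Then R(T) ∩ N(A⁺) = {0} if and only if F = R(T) ⊕ N(A⁺). -/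
/-!
Only `F = R(T) + N(A⁺)` needs proof. Since `‖A⁺(T - A)‖ < 1`, the operator `U = 1 + A⁺(T - A)` is
invertible (Neumann series), and `A⁺AA⁺ = A⁺` gives `A⁺T = A⁺AU`. Hence `A⁺ = A⁺AA⁺ = A⁺TU⁻¹A⁺`,
so for `x = U⁻¹A⁺y` the vector `y - Tx` lies in `N(A⁺)`.
-/

theorem LinearMap.codisjoint_range_ker_of_range_le_range_comp {R M N P : Type*} [Ring R]
    [AddCommGroup M] [AddCommGroup N] [AddCommGroup P] [Module R M] [Module R N] [Module R P]
    (f : M →ₗ[R] N) (g : N →ₗ[R] P) (h : LinearMap.range g ≤ LinearMap.range (g ∘ₗ f)) :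
    Codisjoint (LinearMap.range f) (LinearMap.ker g) := by
  refine Submodule.codisjoint_iff_exists_add_eq.mpr fun y ↦ ?_
  obtain ⟨x, hx⟩ := h ⟨y, rfl⟩
  exact ⟨f x, y - f x, ⟨x, rfl⟩, by simpa [sub_eq_zero] using hx.symm, add_sub_cancel _ _⟩

namespace ContinuousLinearMap

variable {𝕜 E F : Type*} [NontriviallyNormedField 𝕜] [NormedAddCommGroup E] [NormedSpace 𝕜 E]
  [NormedAddCommGroup F] [NormedSpace 𝕜 F] {A T : E →L[𝕜] F} {Ap : F →L[𝕜] E}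

theorem isUnit_one_add_comp_sub [CompleteSpace E] (hT : ‖T - A‖ < ‖Ap‖⁻¹) :
    IsUnit (1 + Ap ∘L (T - A)) := by
  have hAp : 0 < ‖Ap‖ := inv_pos.mp ((norm_nonneg _).trans_lt hT)
  have hC : ‖-(Ap ∘L (T - A))‖ < 1 := calc
    ‖-(Ap ∘L (T - A))‖ ≤ ‖Ap‖ * ‖T - A‖ := (norm_neg _).trans_le (opNorm_comp_le _ _)
    _ < ‖Ap‖ * ‖Ap‖⁻¹ := mul_lt_mul_of_pos_left hT hAp
    _ = 1 := mul_inv_cancel₀ hAp.ne'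
  simpa only [Units.val_oneSub, sub_neg_eq_add] using (Units.oneSub _ hC).isUnit

theorem comp_comp_one_add_comp_sub (h : Ap ∘L A ∘L Ap = Ap) :
    Ap ∘L A ∘L (1 + Ap ∘L (T - A)) = Ap ∘L T := by
  have h' (y : F) : Ap (A (Ap y)) = Ap y := congr($h y)
  ext x
  simp [h']

theorem range_le_range_comp_of_norm_sub_lt [CompleteSpace E] (h : Ap ∘L A ∘L Ap = Ap)
    (hT : ‖T - A‖ < ‖Ap‖⁻¹) :
    LinearMap.range (Ap : F →ₗ[𝕜] E) ≤ LinearMap.range ((Ap : F →ₗ[𝕜] E) ∘ₗ (T : E →ₗ[𝕜] F)) := by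
  obtain ⟨U, hU⟩ := isUnit_one_add_comp_sub hT
  have hApT (x : E) : Ap (T x) = Ap (A ((U : E →L[𝕜] E) x)) := by
    rw [hU]
    exact congr($(comp_comp_one_add_comp_sub h) x).symm
  rintro _ ⟨y, rfl⟩
  refine ⟨(↑U⁻¹ : E →L[𝕜] E) (Ap y), ?_⟩
  have hUU : (U : E →L[𝕜] E) ((↑U⁻¹ : E →L[𝕜] E) (Ap y)) = Ap y :=
    congr($U.mul_inv (Ap y))
  simpa [hApT, hUU] using congr($h y)

end ContinuousLinearMap

theorem stmt_3_general {E F : Type*} [NormedAddCommGroup E] [NormedSpace ℝ E] [CompleteSpace E]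
    [NormedAddCommGroup F] [NormedSpace ℝ F]
    (A T : E →L[ℝ] F) (Ap : F →L[ℝ] E)
    (h2 : Ap ∘L A ∘L Ap = Ap)
    (hT : ‖T - A‖ < ‖Ap‖⁻¹) :
    LinearMap.range (T : E →ₗ[ℝ] F) ⊓ LinearMap.ker (Ap : F →ₗ[ℝ] E) = ⊥ ↔
      IsCompl (LinearMap.range (T : E →ₗ[ℝ] F)) (LinearMap.ker (Ap : F →ₗ[ℝ] E)) := by
  have hcodisjoint := LinearMap.codisjoint_range_ker_of_range_le_range_comp _ _
    (ContinuousLinearMap.range_le_range_comp_of_norm_sub_lt h2 hT)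
  rw [isCompl_iff, ← disjoint_iff, and_iff_left hcodisjoint]

theorem stmt_3 {E F : Type*} [NormedAddCommGroup E] [NormedSpace ℝ E] [CompleteSpace E]
    [NormedAddCommGroup F] [NormedSpace ℝ F] [CompleteSpace F]
    (A T : E →L[ℝ] F) (Ap : F →L[ℝ] E)
    (h1 : A ∘L Ap ∘L A = A) (h2 : Ap ∘L A ∘L Ap = Ap)
    (hT : ‖T - A‖ < ‖Ap‖⁻¹) :
    LinearMap.range (T : E →ₗ[ℝ] F) ⊓ LinearMap.ker (Ap : F →ₗ[ℝ] E) = ⊥ ↔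
      IsCompl (LinearMap.range (T : E →ₗ[ℝ] F)) (LinearMap.ker (Ap : F →ₗ[ℝ] E)) :=
  stmt_3_general A T Ap h2 hT
end

section
/- Let A ∈ B(E,F) have generalized inverse A⁺ and let T ∈ B(E,F) with ‖T − A‖ < ‖A⁺‖⁻¹. Then R(T) ∩ N(A⁺) = {0} if and only if E = N(T) ⊕ R(A⁺). -/
/-!
Write `P` for `A⁺`. The operator `U = 1 + P (T - A)` is invertible by the Neumann series, since
`‖P (T - A)‖ < 1`. Because `P A P = P`, `U` agrees with `P T` on `R(P)`, and `U` maps `R(P)` onto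
itself; hence `P T` restricts to a bijection of `R(P)`, which says exactly that
`E = N(P T) ⊕ R(P)`. Finally `N(P T) = N(T)` if and only if `R(T) ∩ N(P) = {0}`, and a complement
of `R(P)` contained in another one equals it.
-/

open LinearMap Function

theorem IsCompl.eq_of_le_of_isCompl {α : Type*} [Lattice α] [BoundedOrder α] [IsModularLattice α]
    {a b c : α} (ha : IsCompl a c) (hab : a ≤ b) (hb : IsCompl b c) : a = b :=
  eq_of_le_of_inf_le_of_sup_le hab (hb.inf_eq_bot ▸ bot_le)
    (hb.sup_eq_top.trans ha.sup_eq_top.symm).le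

section Algebraic

variable {R M N : Type*} [Ring R] [AddCommGroup M] [Module R M] [AddCommGroup N] [Module R N]

theorem LinearMap.range_inf_ker_eq_bot_iff_ker_comp_eq {L : Type*} [AddCommGroup L] [Module R L]
    (f : M →ₗ[R] N) (g : N →ₗ[R] L) : range f ⊓ ker g = ⊥ ↔ ker (g ∘ₗ f) = ker f := by
  constructor
  · intro h
    refine le_antisymm (fun x hx => ?_) (ker_le_ker_comp f g)
    have hfx : f x ∈ range f ⊓ ker g := ⟨mem_range_self f x, hx⟩
    rwa [h, Submodule.mem_bot] at hfx
  · intro h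
    refine eq_bot_iff.2 fun y ⟨⟨x, hxy⟩, hy⟩ => ?_
    have hx : x ∈ ker (g ∘ₗ f) := by simpa [← hxy] using hy
    rw [h, mem_ker] at hx
    rw [Submodule.mem_bot, ← hxy, hx]

theorem isCompl_ker_comp_range_of_bijective (P : N →ₗ[R] M) (A T : M →ₗ[R] N)
    (hP : P ∘ₗ A ∘ₗ P = P) (hU : Bijective fun x => x + P (T x - A x)) :
    IsCompl (ker (P ∘ₗ T)) (range P) := by
  have hPAP (w : N) : P (A (P w)) = P w := LinearMap.congr_fun hP w
  have comp_eq_on_range {r : M} (hr : r ∈ range P) : P (T r) = r + P (T r - A r) := by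
    obtain ⟨w, rfl⟩ := hr
    rw [map_sub, hPAP]
    abel
  have mem_range_of_mem_range {y : M} (hy : y + P (T y - A y) ∈ range P) : y ∈ range P := by
    simpa using Submodule.sub_mem _ hy (mem_range_self P (T y - A y))
  constructor
  · refine Submodule.disjoint_def.2 fun r hker hr => hU.1 ?_
    change r + P (T r - A r) = 0 + P (T 0 - A 0)
    rw [← comp_eq_on_range hr]
    simpa using hker
  · refine codisjoint_iff.2 (Submodule.eq_top_iff'.2 fun x => ?_)
    obtain ⟨r, hr⟩ : ∃ r, r + P (T r - A r) = P (T x) := hU.2 (P (T x))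
    have hr_mem : r ∈ range P := mem_range_of_mem_range (hr ▸ mem_range_self P (T x))
    refine Submodule.mem_sup.2 ⟨x - r, ?_, r, hr_mem, sub_add_cancel x r⟩
    rw [mem_ker, LinearMap.comp_apply, map_sub, map_sub, comp_eq_on_range hr_mem, hr, sub_self]

end Algebraic

theorem ContinuousLinearMap.bijective_add_comp_sub_of_norm_mul_lt_one {𝕜 E F : Type*}
    [NontriviallyNormedField 𝕜] [NormedAddCommGroup E] [NormedSpace 𝕜 E] [CompleteSpace E]
    [NormedAddCommGroup F] [NormedSpace 𝕜 F] (P : F →L[𝕜] E) (A T : E →L[𝕜] F)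
    (h : ‖P‖ * ‖T - A‖ < 1) : Bijective fun x => x + P (T x - A x) := by
  have hnorm : ‖-(P ∘L (T - A))‖ < 1 :=
    (norm_neg (P ∘L (T - A))).symm ▸ (P.opNorm_comp_le _).trans_lt h
  convert ContinuousLinearMap.isUnit_iff_bijective.1 (isUnit_one_sub_of_norm_lt_one hnorm) using 1
  ext x
  simp only [map_sub, comp_sub, neg_sub, _root_.sub_apply, one_apply_eq_self, comp_apply]
  abel

theorem stmt_4_general {E F : Type*} [NormedAddCommGroup E] [NormedSpace ℝ E] [CompleteSpace E]
    [NormedAddCommGroup F] [NormedSpace ℝ F]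
    (A T : E →L[ℝ] F) (Ap : F →L[ℝ] E)
    (h2 : Ap ∘L A ∘L Ap = Ap)
    (hT : ‖T - A‖ < ‖Ap‖⁻¹) :
    LinearMap.range (T : E →ₗ[ℝ] F) ⊓ LinearMap.ker (Ap : F →ₗ[ℝ] E) = ⊥ ↔
      IsCompl (LinearMap.ker (T : E →ₗ[ℝ] F)) (LinearMap.range (Ap : F →ₗ[ℝ] E)) := by
  have hAp : 0 < ‖Ap‖ := inv_pos.1 ((norm_nonneg _).trans_lt hT)
  have hsmall : ‖Ap‖ * ‖T - A‖ < 1 := (lt_inv_mul_iff₀ hAp).1 (by rwa [mul_one])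
  have hcompl := isCompl_ker_comp_range_of_bijective (Ap : F →ₗ[ℝ] E) A T
    (congrArg ContinuousLinearMap.toLinearMap h2)
    (Ap.bijective_add_comp_sub_of_norm_mul_lt_one A T hsmall)
  rw [range_inf_ker_eq_bot_iff_ker_comp_eq]
  exact ⟨fun h => h ▸ hcompl, fun h => (h.eq_of_le_of_isCompl (ker_le_ker_comp _ _) hcompl).symm⟩

theorem stmt_4 {E F : Type*} [NormedAddCommGroup E] [NormedSpace ℝ E] [CompleteSpace E]
    [NormedAddCommGroup F] [NormedSpace ℝ F] [CompleteSpace F]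
    (A T : E →L[ℝ] F) (Ap : F →L[ℝ] E)
    (h1 : A ∘L Ap ∘L A = A) (h2 : Ap ∘L A ∘L Ap = Ap)
    (hT : ‖T - A‖ < ‖Ap‖⁻¹) :
    LinearMap.range (T : E →ₗ[ℝ] F) ⊓ LinearMap.ker (Ap : F →ₗ[ℝ] E) = ⊥ ↔
      IsCompl (LinearMap.ker (T : E →ₗ[ℝ] F)) (LinearMap.range (Ap : F →ₗ[ℝ] E)) :=
  stmt_4_general A T Ap h2 hT
end

section
/- Let A ∈ B(E,F) have generalized inverse A⁺ and let T ∈ B(E,F) with ‖T − A‖ < ‖A⁺‖⁻¹. Then R(T) ∩ N(A⁺) = {0} if and only if (I_E − A⁺A) N(T) = N(A). -/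
/-!
Let `P = 1 - A⁺A`, the projection onto `N(A)`, and `B = 1 + A⁺(T - A) = P + A⁺T`, which is
invertible because `‖A⁺(T - A)‖ < 1`. The map `B` agrees with `P` at every `x` with `A⁺Tx = 0`,
in particular on `N(T)`.

If `R(T) ∩ N(A⁺) = 0` and `v ∈ N(A)`, write `v = Bx`; applying `A⁺A` kills `v` and `Px` and leaves
`A⁺Tx`, so `Tx = 0` and `v = Px`. Conversely, if `P N(T) = N(A)` and `A⁺Tx = 0`, then `Px = Pz` for
some `z ∈ N(T)`, hence `Bx = Bz`, so `x = z` and `Tx = 0`.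
-/

namespace LinearMap

variable {R M N : Type*} [Ring R] [AddCommGroup M] [Module R M] [AddCommGroup N] [Module R N]
  {A T : M →ₗ[R] N} {Ap : N →ₗ[R] M}

theorem map_one_sub_comp_le_ker (h1 : A ∘ₗ Ap ∘ₗ A = A) (K : Submodule R M) :
    K.map (1 - Ap ∘ₗ A) ≤ ker A := by
  rintro _ ⟨x, -, rfl⟩
  simpa [sub_eq_zero] using (LinearMap.congr_fun h1 x).symm

theorem map_ker_eq_ker_of_surjective (h1 : A ∘ₗ Ap ∘ₗ A = A) (h2 : Ap ∘ₗ A ∘ₗ Ap = Ap)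
    (hB : Function.Surjective (1 + Ap ∘ₗ (T - A) : M →ₗ[R] M)) (hT : range T ⊓ ker Ap = ⊥) :
    (ker T).map (1 - Ap ∘ₗ A) = ker A := by
  refine le_antisymm (map_one_sub_comp_le_ker h1 _) fun v hv => ?_
  obtain ⟨x, rfl⟩ := hB v
  have hApTx : Ap (T x) = 0 := by
    have hApA : ∀ y, Ap (A (Ap y)) = Ap y := fun y => LinearMap.congr_fun h2 y
    simpa [hApA] using congr(Ap $hv)
  have hTx : T x = 0 := by
    have hmem : T x ∈ range T ⊓ ker Ap := ⟨mem_range_self T x, hApTx⟩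
    rwa [hT, Submodule.mem_bot] at hmem
  exact ⟨x, hTx, by simp [hApTx, sub_eq_add_neg]⟩

theorem range_inf_ker_eq_bot_of_injective (h1 : A ∘ₗ Ap ∘ₗ A = A)
    (hB : Function.Injective (1 + Ap ∘ₗ (T - A) : M →ₗ[R] M))
    (hT : (ker T).map (1 - Ap ∘ₗ A) = ker A) :
    range T ⊓ ker Ap = ⊥ := by
  refine eq_bot_iff.2 ?_
  rintro _ ⟨⟨x, rfl⟩, hx⟩
  obtain ⟨z, hz, hPzx⟩ := hT.ge (map_one_sub_comp_le_ker h1 ⊤ ⟨x, trivial, rfl⟩)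
  have hzx : z = x := hB (by simp_all [sub_eq_add_neg])
  simpa [← hzx] using hz

end LinearMap

theorem ContinuousLinearMap.isUnit_one_add_comp_sub_s5 {𝕜 E F : Type*} [NontriviallyNormedField 𝕜]
    [NormedAddCommGroup E] [NormedSpace 𝕜 E] [CompleteSpace E]
    [NormedAddCommGroup F] [NormedSpace 𝕜 F]
    {A T : E →L[𝕜] F} {Ap : F →L[𝕜] E} (hT : ‖T - A‖ < ‖Ap‖⁻¹) :
    IsUnit (1 + Ap ∘L (T - A)) := by
  have hAp : 0 < ‖Ap‖ := inv_pos.1 ((norm_nonneg _).trans_lt hT)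
  have hnorm : ‖-(Ap ∘L (T - A))‖ < 1 := calc
    ‖-(Ap ∘L (T - A))‖ ≤ ‖Ap‖ * ‖T - A‖ := by rw [norm_neg]; exact opNorm_comp_le _ _
    _ < ‖Ap‖ * ‖Ap‖⁻¹ := by gcongr
    _ = 1 := mul_inv_cancel₀ hAp.ne'
  simpa only [sub_neg_eq_add] using isUnit_one_sub_of_norm_lt_one hnorm

theorem stmt_5_general {E F : Type*} [NormedAddCommGroup E] [NormedSpace ℝ E] [CompleteSpace E]
    [NormedAddCommGroup F] [NormedSpace ℝ F]
    (A T : E →L[ℝ] F) (Ap : F →L[ℝ] E)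
    (h1 : A ∘L Ap ∘L A = A) (h2 : Ap ∘L A ∘L Ap = Ap)
    (hT : ‖T - A‖ < ‖Ap‖⁻¹) :
    LinearMap.range (T : E →ₗ[ℝ] F) ⊓ LinearMap.ker (Ap : F →ₗ[ℝ] E) = ⊥ ↔
      Submodule.map (((1 : E →L[ℝ] E) - Ap ∘L A : E →L[ℝ] E) : E →ₗ[ℝ] E) (LinearMap.ker (T : E →ₗ[ℝ] F)) = LinearMap.ker (A : E →ₗ[ℝ] F) := by
  have hB := ContinuousLinearMap.isUnit_iff_bijective.1
    (ContinuousLinearMap.isUnit_one_add_comp_sub_s5 hT)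
  have h1' := congr(ContinuousLinearMap.toLinearMap $h1)
  have h2' := congr(ContinuousLinearMap.toLinearMap $h2)
  simp only [ContinuousLinearMap.toLinearMap_comp, ContinuousLinearMap.toLinearMap_sub,
    ContinuousLinearMap.toLinearMap_one] at h1' h2' ⊢
  exact ⟨LinearMap.map_ker_eq_ker_of_surjective h1' h2' hB.2,
    LinearMap.range_inf_ker_eq_bot_of_injective h1' hB.1⟩

theorem stmt_5 {E F : Type*} [NormedAddCommGroup E] [NormedSpace ℝ E] [CompleteSpace E]
    [NormedAddCommGroup F] [NormedSpace ℝ F] [CompleteSpace F]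
    (A T : E →L[ℝ] F) (Ap : F →L[ℝ] E)
    (h1 : A ∘L Ap ∘L A = A) (h2 : Ap ∘L A ∘L Ap = Ap)
    (hT : ‖T - A‖ < ‖Ap‖⁻¹) :
    LinearMap.range (T : E →ₗ[ℝ] F) ⊓ LinearMap.ker (Ap : F →ₗ[ℝ] E) = ⊥ ↔
      Submodule.map (((1 : E →L[ℝ] E) - Ap ∘L A : E →L[ℝ] E) : E →ₗ[ℝ] E) (LinearMap.ker (T : E →ₗ[ℝ] F)) = LinearMap.ker (A : E →ₗ[ℝ] F) :=
  stmt_5_general A T Ap h1 h2 hT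
end

section
/- Let A ∈ B(E,F) have generalized inverse A⁺ and let T ∈ B(E,F) with ‖T − A‖ < ‖A⁺‖⁻¹. Then R(T) ∩ N(A⁺) = {0} if and only if C_A(A⁺,T)⁻¹ T maps N(A) into R(A), where C_A(A⁺,T) = I_F + (T−A)A⁺. -/
/-! Write `C = I + (T - A)A⁺`. It fixes `N(A⁺)` and `C A = T A⁺ A`, so `C⁻¹` fixes `N(A⁺)` and
`C⁻¹ T A⁺ A = A`. If `R(T) ∩ N(A⁺) = 0` and `w = C⁻¹ T e`, then `w - A A⁺ w` lies in `N(A⁺)` and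
equals `C⁻¹ T (e - A⁺ w)`, so by injectivity of `C⁻¹` it is `T (e - A⁺ w)`; hence it vanishes and
`w ∈ R(A)`. Conversely, `f = T u ∈ N(A⁺)` gives `f = C⁻¹ T u = A u + C⁻¹ T (u - A⁺ A u) ∈ R(A)`,
and `R(A) ∩ N(A⁺) = 0`. -/

open Function LinearMap

section GeneralizedInverse

variable {R E F : Type*} [Ring R] [AddCommGroup E] [Module R E] [AddCommGroup F] [Module R F]
  {A : E →ₗ[R] F} {Ap : F →ₗ[R] E}

theorem range_inf_ker_eq_bot_of_apply_apply_apply_eq (hA : ∀ x, A (Ap (A x)) = A x) :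
    range A ⊓ ker Ap = ⊥ := by
  refine eq_bot_iff.mpr fun y hy => ?_
  obtain ⟨⟨x, rfl⟩, hx⟩ := Submodule.mem_inf.mp hy
  rw [Submodule.mem_bot, ← hA x, mem_ker.mp hx, map_zero]

theorem range_inf_ker_eq_bot_iff_forall_mem_range (T : E →ₗ[R] F) {D : F →ₗ[R] F}
    (hA : ∀ x, A (Ap (A x)) = A x) (hAp : ∀ y, Ap (A (Ap y)) = Ap y)
    (hD : Injective D) (hDfix : ∀ y ∈ ker Ap, D y = y) (hDT : ∀ x, D (T (Ap (A x))) = A x) :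
    range T ⊓ ker Ap = ⊥ ↔ ∀ e ∈ ker A, D (T e) ∈ range A := by
  constructor
  · intro h e _
    set w := D (T e)
    have hf : w - A (Ap w) ∈ range T ⊓ ker Ap := by
      have hker : w - A (Ap w) ∈ ker Ap := by simp [hAp]
      refine ⟨⟨e - Ap w, hD ?_⟩, hker⟩
      calc D (T (e - Ap w)) = w - D (T (Ap (A (Ap w)))) := by rw [hAp, map_sub, map_sub]
        _ = D (w - A (Ap w)) := by rw [hDT, hDfix _ hker]
    rw [h, Submodule.mem_bot, sub_eq_zero] at hf
    exact ⟨Ap w, hf.symm⟩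
  · intro h
    refine eq_bot_iff.mpr fun f hf => ?_
    obtain ⟨⟨u, rfl⟩, hu⟩ := Submodule.mem_inf.mp hf
    obtain ⟨x, hx⟩ := h (u - Ap (A u)) (by simp [hA])
    have hTu : T u = A (u + x) := calc
      T u = D (T (Ap (A u))) + D (T (u - Ap (A u))) := by
        rw [← map_add, ← map_add, add_sub_cancel, hDfix _ hu]
      _ = A (u + x) := by rw [hDT, ← hx, map_add]
    rw [← range_inf_ker_eq_bot_of_apply_apply_apply_eq hA]
    exact ⟨⟨u + x, hTu.symm⟩, hu⟩

end GeneralizedInverse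

namespace ContinuousLinearMap

section RingInverse

variable {R M : Type*} [Semiring R] [TopologicalSpace M] [AddCommMonoid M] [Module R M]
  {C : M →L[R] M}

theorem ringInverse_apply_eq_of_apply_eq (hC : IsUnit C) {y z : M} (h : C y = z) :
    Ring.inverse C z = y := by
  rw [← h, ← mul_apply_eq_comp, Ring.inverse_mul_cancel C hC, one_apply_eq_self]

theorem injective_ringInverse (hC : IsUnit C) : Injective ⇑(Ring.inverse C) :=
  LeftInverse.injective (g := C) fun y => by
    rw [← mul_apply_eq_comp, Ring.mul_inverse_cancel C hC, one_apply_eq_self]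

end RingInverse

section Perturbation

variable {R E F : Type*} [Ring R] [TopologicalSpace E] [AddCommGroup E] [Module R E]
  [TopologicalSpace F] [AddCommGroup F] [Module R F] [IsTopologicalAddGroup F]

theorem one_add_comp_apply_of_apply_eq_zero (B : E →L[R] F) {Ap : F →L[R] E} {y : F}
    (hy : Ap y = 0) : (1 + B ∘L Ap) y = y := by
  simp [hy]

theorem one_add_sub_comp_apply_apply (T : E →L[R] F) {A : E →L[R] F} {Ap : F →L[R] E}
    (hA : ∀ x, A (Ap (A x)) = A x) (x : E) : (1 + (T - A) ∘L Ap) (A x) = T (Ap (A x)) := by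
  simp [hA]

end Perturbation

theorem isUnit_one_add_comp_of_norm_lt_inv {𝕜 E F : Type*} [NontriviallyNormedField 𝕜]
    [NormedAddCommGroup E] [NormedSpace 𝕜 E] [NormedAddCommGroup F] [NormedSpace 𝕜 F]
    [CompleteSpace F] {B : E →L[𝕜] F} {Ap : F →L[𝕜] E} (h : ‖B‖ < ‖Ap‖⁻¹) :
    IsUnit (1 + B ∘L Ap) := by
  have hAp : 0 < ‖Ap‖ := by
    by_contra! h0
    rw [le_antisymm h0 (norm_nonneg Ap), inv_zero] at h
    exact (norm_nonneg B).not_gt h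
  have hBAp : ‖-(B ∘L Ap)‖ < 1 := calc
    ‖-(B ∘L Ap)‖ ≤ ‖B‖ * ‖Ap‖ := (norm_neg (B ∘L Ap)).trans_le (opNorm_comp_le B Ap)
    _ < ‖Ap‖⁻¹ * ‖Ap‖ := mul_lt_mul_of_pos_right h hAp
    _ = 1 := inv_mul_cancel₀ hAp.ne'
  simpa only [sub_neg_eq_add] using isUnit_one_sub_of_norm_lt_one hBAp

end ContinuousLinearMap

theorem stmt_6_general {E F : Type*} [NormedAddCommGroup E] [NormedSpace ℝ E]
    [NormedAddCommGroup F] [NormedSpace ℝ F] [CompleteSpace F]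
    (A T : E →L[ℝ] F) (Ap : F →L[ℝ] E)
    (h1 : A ∘L Ap ∘L A = A) (h2 : Ap ∘L A ∘L Ap = Ap)
    (hT : ‖T - A‖ < ‖Ap‖⁻¹) :
    LinearMap.range (T : E →ₗ[ℝ] F) ⊓ LinearMap.ker (Ap : F →ₗ[ℝ] E) = ⊥ ↔
      ∀ e ∈ LinearMap.ker (A : E →ₗ[ℝ] F),
        (Ring.inverse ((1 : F →L[ℝ] F) + (T - A) ∘L Ap) ∘L T) e ∈ LinearMap.range (A : E →ₗ[ℝ] F) := by
  have hA (x : E) : A (Ap (A x)) = A x := congr($h1 x)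
  have hC := ContinuousLinearMap.isUnit_one_add_comp_of_norm_lt_inv hT
  refine range_inf_ker_eq_bot_iff_forall_mem_range (T : E →ₗ[ℝ] F) hA (fun y => congr($h2 y))
    (ContinuousLinearMap.injective_ringInverse hC) (fun y hy => ?_) (fun x => ?_)
  · exact ContinuousLinearMap.ringInverse_apply_eq_of_apply_eq hC
      (ContinuousLinearMap.one_add_comp_apply_of_apply_eq_zero _ hy)
  · exact ContinuousLinearMap.ringInverse_apply_eq_of_apply_eq hC
      (ContinuousLinearMap.one_add_sub_comp_apply_apply T hA x)

theorem stmt_6 {E F : Type*} [NormedAddCommGroup E] [NormedSpace ℝ E] [CompleteSpace E]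
    [NormedAddCommGroup F] [NormedSpace ℝ F] [CompleteSpace F]
    (A T : E →L[ℝ] F) (Ap : F →L[ℝ] E)
    (h1 : A ∘L Ap ∘L A = A) (h2 : Ap ∘L A ∘L Ap = Ap)
    (hT : ‖T - A‖ < ‖Ap‖⁻¹) :
    LinearMap.range (T : E →ₗ[ℝ] F) ⊓ LinearMap.ker (Ap : F →ₗ[ℝ] E) = ⊥ ↔
      ∀ e ∈ LinearMap.ker (A : E →ₗ[ℝ] F),
        (Ring.inverse ((1 : F →L[ℝ] F) + (T - A) ∘L Ap) ∘L T) e ∈ LinearMap.range (A : E →ₗ[ℝ] F) :=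
  stmt_6_general A T Ap h1 h2 hT
end

section
/- Let A ∈ B(E,F) have generalized inverse A⁺, with both rank A = k < ∞, and let T ∈ B(E,F) satisfy ‖T−A‖ < ‖A⁺‖⁻¹ and rank T = k. Then R(T) ∩ N(A⁺) = {0}. -/
/-!
Put `C = 1 + A⁺(T - A)`. Since `A⁺AA⁺ = A⁺` we have `A⁺T = A⁺A C`, and `C` is invertible by the
Neumann series because `‖A⁺(T - A)‖ < 1`; hence `A⁺(R(T)) = R(A⁺T) = R(A⁺A)`. From `AA⁺A = A`,
`rank (A⁺A) = rank A = k`. So `A⁺` maps the `k`-dimensional space `R(T)` onto a `k`-dimensional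
space, and is therefore injective on it.
-/

open Module LinearMap

universe u v

section LinearAlgebra

variable {K : Type*} {V : Type u} {W : Type v} [Ring K] [AddCommGroup V] [Module K V]
  [AddCommGroup W] [Module K W]

theorem LinearMap.finrank_range_comp_of_comp_comp_eq {f : V →ₗ[K] W} {g : W →ₗ[K] V}
    (h : f ∘ₗ g ∘ₗ f = f) : finrank K (range (g ∘ₗ f)) = finrank K (range f) := by
  have hle : Cardinal.lift.{v} (rank (g ∘ₗ f)) ≤ Cardinal.lift.{u} (rank f) :=
    lift_rank_comp_le_right f g
  have hge : Cardinal.lift.{u} (rank f) ≤ Cardinal.lift.{v} (rank (g ∘ₗ f)) := by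
    simpa only [h] using lift_rank_comp_le_right (g ∘ₗ f) f
  have := congrArg Cardinal.toNat (le_antisymm hle hge)
  rwa [Cardinal.toNat_lift, Cardinal.toNat_lift] at this

theorem LinearMap.range_comp_eq_of_surjective_one_add {f t : V →ₗ[K] W} {g : W →ₗ[K] V}
    (h : g ∘ₗ f ∘ₗ g = g) (hu : Function.Surjective ⇑(1 + g ∘ₗ (t - f) : V →ₗ[K] V)) :
    range (g ∘ₗ t) = range (g ∘ₗ f) := by
  have hfactor : g ∘ₗ t = (g ∘ₗ f) ∘ₗ (1 + g ∘ₗ (t - f)) := by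
    rw [comp_add, ← comp_assoc (t - f) g, comp_assoc g f g, h, Module.End.one_eq_id, comp_id,
      comp_sub, add_sub_cancel]
  rw [hfactor, range_comp_of_range_eq_top _ (range_eq_top.mpr hu)]

end LinearAlgebra

theorem ContinuousLinearMap.isUnit_one_add_comp_of_norm_lt_inv_s8 {𝕜 E F : Type*}
    [NontriviallyNormedField 𝕜] [NormedAddCommGroup E] [NormedSpace 𝕜 E] [CompleteSpace E]
    [NormedAddCommGroup F] [NormedSpace 𝕜 F] {B : F →L[𝕜] E} {D : E →L[𝕜] F}
    (hD : ‖D‖ < ‖B‖⁻¹) : IsUnit (1 + B ∘L D) := by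
  have hsmall : ‖-(B ∘L D)‖ < 1 := by
    rw [norm_neg]
    refine (opNorm_comp_le B D).trans_lt ?_
    rcases (norm_nonneg B).eq_or_lt with hB | hB
    · simp [← hB]
    · simpa using (lt_inv_mul_iff₀ hB).mp (by simpa using hD)
  simpa [sub_eq_add_neg] using isUnit_one_sub_of_norm_lt_one hsmall

theorem stmt_8_general {E F : Type*} [NormedAddCommGroup E] [NormedSpace ℝ E] [CompleteSpace E]
    [NormedAddCommGroup F] [NormedSpace ℝ F]
    (A T : E →L[ℝ] F) (Ap : F →L[ℝ] E) (k : ℕ)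
    (h1 : A ∘L Ap ∘L A = A) (h2 : Ap ∘L A ∘L Ap = Ap)
    (hTfin : FiniteDimensional ℝ (LinearMap.range (T : E →ₗ[ℝ] F)))
    (hrankA : Module.finrank ℝ (LinearMap.range (A : E →ₗ[ℝ] F)) = k)
    (hrankT : Module.finrank ℝ (LinearMap.range (T : E →ₗ[ℝ] F)) = k)
    (hT : ‖T - A‖ < ‖Ap‖⁻¹) :
    LinearMap.range (T : E →ₗ[ℝ] F) ⊓ LinearMap.ker (Ap : F →ₗ[ℝ] E) = ⊥ := by
  have hA : (A : E →ₗ[ℝ] F) ∘ₗ (Ap : F →ₗ[ℝ] E) ∘ₗ (A : E →ₗ[ℝ] F) = A := congr($h1)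
  have hAp : (Ap : F →ₗ[ℝ] E) ∘ₗ (A : E →ₗ[ℝ] F) ∘ₗ (Ap : F →ₗ[ℝ] E) = Ap := congr($h2)
  have hunit : IsUnit (1 + Ap ∘L (T - A)) :=
    ContinuousLinearMap.isUnit_one_add_comp_of_norm_lt_inv_s8 hT
  have hsurj : Function.Surjective
      ⇑(1 + (Ap : F →ₗ[ℝ] E) ∘ₗ ((T : E →ₗ[ℝ] F) - (A : E →ₗ[ℝ] F))) :=
    ((Module.End.isUnit_iff _).mp (hunit.map ContinuousLinearMap.toLinearMapRingHom)).surjective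
  rw [← disjoint_iff]
  refine Submodule.disjoint_ker_of_finrank_le _ ?_
  rw [← range_comp, range_comp_eq_of_surjective_one_add hAp hsurj,
    finrank_range_comp_of_comp_comp_eq hA, hrankA, hrankT]

theorem stmt_8 {E F : Type*} [NormedAddCommGroup E] [NormedSpace ℝ E] [CompleteSpace E]
    [NormedAddCommGroup F] [NormedSpace ℝ F] [CompleteSpace F]
    (A T : E →L[ℝ] F) (Ap : F →L[ℝ] E) (k : ℕ)
    (h1 : A ∘L Ap ∘L A = A) (h2 : Ap ∘L A ∘L Ap = Ap)
    (hAfin : FiniteDimensional ℝ (LinearMap.range (A : E →ₗ[ℝ] F)))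
    (hTfin : FiniteDimensional ℝ (LinearMap.range (T : E →ₗ[ℝ] F)))
    (hrankA : Module.finrank ℝ (LinearMap.range (A : E →ₗ[ℝ] F)) = k)
    (hrankT : Module.finrank ℝ (LinearMap.range (T : E →ₗ[ℝ] F)) = k)
    (hT : ‖T - A‖ < ‖Ap‖⁻¹) :
    LinearMap.range (T : E →ₗ[ℝ] F) ⊓ LinearMap.ker (Ap : F →ₗ[ℝ] E) = ⊥ :=
  stmt_8_general A T Ap k h1 h2 hTfin hrankA hrankT hT
end

section
/- Let A ∈ B(E,F) have generalized inverse A⁺ and let T ∈ B(E,F) with ‖T−A‖ < ‖A⁺‖⁻¹ and R(T) ∩ N(A⁺) = {0}. Then dim N(T) = dim N(A) and codim R(T) = codim R(A) (T and A belong to the same class among F_k, Φ_{m,n}, Φ_{m,∞}, Φ_{∞,n}). -/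
/-!
Since `‖(T - A) A⁺‖ < 1`, the operator `W = 1 + (T - A) A⁺` is invertible, and `B = A⁺ W⁻¹`
satisfies `B T B = B`; as `W` fixes `N(A⁺)` pointwise, `N(B) = N(A⁺)` and `R(B) = R(A⁺)`.
The hypothesis `R(T) ∩ N(A⁺) = {0}` upgrades this to `T B T = T`. Whenever `S G S = S` and
`G S G = G`, the idempotents `G S` and `S G` split the spaces as `N(S) ⊕ R(G)` and `R(S) ⊕ N(G)`.
So `N(T)` and `N(A)` are complements of the same subspace `R(A⁺)`, and `R(T)`, `R(A)` complements
of `N(A⁺)`.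
-/

open LinearMap

namespace LinearMap

variable {R M N : Type*} [Ring R] [AddCommGroup M] [Module R M] [AddCommGroup N] [Module R N]

section GeneralizedInverse

variable {f : M →ₗ[R] N} {g : N →ₗ[R] M}

lemma isIdempotentElem_comp_of_comp_comp_eq (h : f ∘ₗ g ∘ₗ f = f) :
    IsIdempotentElem (g ∘ₗ f) := by
  change g ∘ₗ f ∘ₗ g ∘ₗ f = g ∘ₗ f
  rw [h]

lemma ker_comp_of_comp_comp_eq (h : f ∘ₗ g ∘ₗ f = f) : ker (g ∘ₗ f) = ker f := by
  refine le_antisymm (fun x hx => ?_) (ker_le_ker_comp f g)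
  rw [mem_ker, ← h]
  simpa using congrArg f hx

lemma range_comp_of_comp_comp_eq (h : g ∘ₗ f ∘ₗ g = g) : range (g ∘ₗ f) = range g :=
  le_antisymm (range_comp_le_range f g) fun _ ⟨y, hy⟩ =>
    ⟨g y, by simpa [← hy] using congrArg (· y) h⟩

lemma isCompl_range_ker_of_comp_comp_eq (hf : f ∘ₗ g ∘ₗ f = f) (hg : g ∘ₗ f ∘ₗ g = g) :
    IsCompl (range g) (ker f) := by
  simpa only [range_comp_of_comp_comp_eq hg, ker_comp_of_comp_comp_eq hf] using
    (isIdempotentElem_comp_of_comp_comp_eq hf).isCompl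

lemma comp_comp_eq_of_range_inf_ker_eq_bot (hg : g ∘ₗ f ∘ₗ g = g) (h : range f ⊓ ker g = ⊥) :
    f ∘ₗ g ∘ₗ f = f := by
  ext x
  have hmem : f x - f (g (f x)) ∈ range f ⊓ ker g := by
    refine ⟨⟨x - g (f x), map_sub f _ _⟩, ?_⟩
    simpa [sub_eq_zero] using (congrArg (· (f x)) hg).symm
  rw [h, Submodule.mem_bot, sub_eq_zero] at hmem
  exact hmem.symm

theorem rank_ker_eq_and_rank_quotient_range_eq {f f' : M →ₗ[R] N} {g g' : N →ₗ[R] M}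
    (hf : f ∘ₗ g ∘ₗ f = f) (hg : g ∘ₗ f ∘ₗ g = g) (hf' : f' ∘ₗ g' ∘ₗ f' = f')
    (hg' : g' ∘ₗ f' ∘ₗ g' = g') (hrange : range g = range g') (hker : ker g = ker g') :
    Module.rank R (ker f) = Module.rank R (ker f') ∧
      Module.rank R (N ⧸ range f) = Module.rank R (N ⧸ range f') := by
  open Submodule in
  constructor
  · rw [← (quotientEquivOfIsCompl _ _ (isCompl_range_ker_of_comp_comp_eq hf hg)).rank_eq,
      ← (quotientEquivOfIsCompl _ _ (isCompl_range_ker_of_comp_comp_eq hf' hg')).rank_eq, hrange]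
  · rw [(quotientEquivOfIsCompl _ _ (isCompl_range_ker_of_comp_comp_eq hg hf)).rank_eq,
      (quotientEquivOfIsCompl _ _ (isCompl_range_ker_of_comp_comp_eq hg' hf')).rank_eq, hker]

end GeneralizedInverse

section Perturbation

variable {A T : M →ₗ[R] N} {Ap : N →ₗ[R] M} {u : (Module.End R N)ˣ}

lemma units_apply_of_mem_ker (hu : (u : Module.End R N) = 1 + (T - A) ∘ₗ Ap) {z : N}
    (hz : z ∈ ker Ap) : (u : Module.End R N) z = z := by
  simp_all

lemma units_inv_apply_of_mem_ker (hu : (u : Module.End R N) = 1 + (T - A) ∘ₗ Ap) {z : N}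
    (hz : z ∈ ker Ap) : (↑u⁻¹ : Module.End R N) z = z := by
  conv_lhs => rw [← units_apply_of_mem_ker hu hz]
  rw [← Module.End.mul_apply, u.inv_mul, Module.End.one_apply]

lemma ker_comp_units_inv (hu : (u : Module.End R N) = 1 + (T - A) ∘ₗ Ap) :
    ker (Ap ∘ₗ (↑u⁻¹ : Module.End R N)) = ker Ap := by
  ext z
  refine ⟨fun hz => ?_, fun hz => by simp [units_inv_apply_of_mem_ker hu hz, mem_ker.mp hz]⟩
  have : (u : Module.End R N) ((↑u⁻¹ : Module.End R N) z) = z := by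
    rw [← Module.End.mul_apply, u.mul_inv, Module.End.one_apply]
  rwa [← this, units_apply_of_mem_ker hu hz]

lemma range_comp_units_inv : range (Ap ∘ₗ (↑u⁻¹ : Module.End R N)) = range Ap :=
  range_comp_of_range_eq_top _ <| range_eq_top.mpr fun y =>
    ⟨(u : Module.End R N) y, by rw [← Module.End.mul_apply, u.inv_mul, Module.End.one_apply]⟩

lemma comp_units_inv_comp_comp_eq (hu : (u : Module.End R N) = 1 + (T - A) ∘ₗ Ap)
    (h : Ap ∘ₗ A ∘ₗ Ap = Ap) :
    (Ap ∘ₗ (↑u⁻¹ : Module.End R N)) ∘ₗ T ∘ₗ (Ap ∘ₗ (↑u⁻¹ : Module.End R N)) =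
      Ap ∘ₗ (↑u⁻¹ : Module.End R N) := by
  have hApAAp (y : N) : Ap (A (Ap y)) = Ap y := congrArg (· y) h
  have hTAp (y : N) : T (Ap y) = (u : Module.End R N) (A (Ap y)) := by simp [hu, hApAAp]
  ext y
  simp only [comp_apply, hTAp]
  rw [← Module.End.mul_apply, u.inv_mul, Module.End.one_apply, hApAAp]

end Perturbation

end LinearMap

namespace ContinuousLinearMap

variable {𝕜 E F : Type*} [NontriviallyNormedField 𝕜] [NormedAddCommGroup E] [NormedSpace 𝕜 E]
  [NormedAddCommGroup F] [NormedSpace 𝕜 F] [CompleteSpace F]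

lemma isUnit_one_add_sub_comp {A T : E →L[𝕜] F} {Ap : F →L[𝕜] E} (hT : ‖T - A‖ < ‖Ap‖⁻¹) :
    IsUnit (1 + ((T : E →ₗ[𝕜] F) - (A : E →ₗ[𝕜] F)) ∘ₗ (Ap : F →ₗ[𝕜] E) : Module.End 𝕜 F) := by
  have hAp : 0 < ‖Ap‖ := inv_pos.mp ((norm_nonneg _).trans_lt hT)
  have hC : ‖-((T - A) ∘L Ap)‖ < 1 := by
    rw [norm_neg]
    calc ‖(T - A) ∘L Ap‖ ≤ ‖T - A‖ * ‖Ap‖ := opNorm_comp_le _ _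
      _ < ‖Ap‖⁻¹ * ‖Ap‖ := mul_lt_mul_of_pos_right hT hAp
      _ = 1 := inv_mul_cancel₀ hAp.ne'
  convert (Units.oneSub _ hC).isUnit.map toLinearMapRingHom using 1
  rw [Units.val_oneSub, sub_neg_eq_add, map_add, map_one]
  rfl

end ContinuousLinearMap

theorem stmt_9_general {E F : Type*} [NormedAddCommGroup E] [NormedSpace ℝ E]
    [NormedAddCommGroup F] [NormedSpace ℝ F] [CompleteSpace F]
    (A T : E →L[ℝ] F) (Ap : F →L[ℝ] E)
    (h1 : A ∘L Ap ∘L A = A) (h2 : Ap ∘L A ∘L Ap = Ap)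
    (hT : ‖T - A‖ < ‖Ap‖⁻¹)
    (hR : LinearMap.range (T : E →ₗ[ℝ] F) ⊓ LinearMap.ker (Ap : F →ₗ[ℝ] E) = ⊥) :
    Module.rank ℝ (LinearMap.ker (T : E →ₗ[ℝ] F)) = Module.rank ℝ (LinearMap.ker (A : E →ₗ[ℝ] F)) ∧
    Module.rank ℝ (F ⧸ LinearMap.range (T : E →ₗ[ℝ] F)) = Module.rank ℝ (F ⧸ LinearMap.range (A : E →ₗ[ℝ] F)) := by
  have hA : (A : E →ₗ[ℝ] F) ∘ₗ (Ap : F →ₗ[ℝ] E) ∘ₗ (A : E →ₗ[ℝ] F) = A := by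
    simpa using congrArg ContinuousLinearMap.toLinearMap h1
  have hAp : (Ap : F →ₗ[ℝ] E) ∘ₗ (A : E →ₗ[ℝ] F) ∘ₗ (Ap : F →ₗ[ℝ] E) = Ap := by
    simpa using congrArg ContinuousLinearMap.toLinearMap h2
  obtain ⟨u, hu⟩ := ContinuousLinearMap.isUnit_one_add_sub_comp hT
  have hB := comp_units_inv_comp_comp_eq hu hAp
  have hker := ker_comp_units_inv hu
  have hT' := comp_comp_eq_of_range_inf_ker_eq_bot hB (hker ▸ hR)
  exact rank_ker_eq_and_rank_quotient_range_eq hT' hB hA hAp range_comp_units_inv hker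

theorem stmt_9 {E F : Type*} [NormedAddCommGroup E] [NormedSpace ℝ E] [CompleteSpace E]
    [NormedAddCommGroup F] [NormedSpace ℝ F] [CompleteSpace F]
    (A T : E →L[ℝ] F) (Ap : F →L[ℝ] E)
    (h1 : A ∘L Ap ∘L A = A) (h2 : Ap ∘L A ∘L Ap = Ap)
    (hT : ‖T - A‖ < ‖Ap‖⁻¹)
    (hR : LinearMap.range (T : E →ₗ[ℝ] F) ⊓ LinearMap.ker (Ap : F →ₗ[ℝ] E) = ⊥) :
    Module.rank ℝ (LinearMap.ker (T : E →ₗ[ℝ] F)) = Module.rank ℝ (LinearMap.ker (A : E →ₗ[ℝ] F)) ∧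
    Module.rank ℝ (F ⧸ LinearMap.range (T : E →ₗ[ℝ] F)) = Module.rank ℝ (F ⧸ LinearMap.range (A : E →ₗ[ℝ] F)) :=
  stmt_9_general A T Ap h1 h2 hT hR
end

section
/- Let X ∈ B(E,F) be nonzero with generalized inverse X⁺, and let M(X) = { T ∈ B(E,F) : T N(X) ⊆ R(X) }. Then M(X) = { P_{R(X)} T + (I_F − P_{R(X)}) T P_{R(X⁺)} : T ∈ B(E,F) }, where P_{R(X)} = X X⁺ is the projection onto R(X) along N(X⁺) and P_{R(X⁺)} = X⁺ X is the projection onto R(X⁺) along N(X). -/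
namespace ContinuousLinearMap

variable {R E F : Type*} [Ring R] [TopologicalSpace E] [AddCommGroup E] [Module R E]
  [TopologicalSpace F] [AddCommGroup F] [Module R F] [IsTopologicalAddGroup F]
  {X : E →L[R] F} {Xp : F →L[R] E}

theorem apply_mem_range_of_mem_ker_projection_sum (S : E →L[R] F) {e : E}
    (he : e ∈ LinearMap.ker (X : E →ₗ[R] F)) :
    ((X ∘L Xp) ∘L S + ((1 : F →L[R] F) - X ∘L Xp) ∘L S ∘L (Xp ∘L X)) e ∈
      LinearMap.range (X : E →ₗ[R] F) := by
  have hXe : X e = 0 := he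
  exact ⟨Xp (S e), by simp [hXe]⟩

/- With `P = X Xp` and `Q = Xp X`, `T = P T + (1 - P) T Q + (1 - P) T (1 - Q)`, and the last
term vanishes because `1 - Q` maps into `N(X)` and `1 - P` vanishes on `R(X)`. -/
theorem projection_sum_eq_self_of_mapsTo_ker_range (h1 : X ∘L Xp ∘L X = X) {T : E →L[R] F}
    (hT : ∀ e ∈ LinearMap.ker (X : E →ₗ[R] F), T e ∈ LinearMap.range (X : E →ₗ[R] F)) :
    (X ∘L Xp) ∘L T + ((1 : F →L[R] F) - X ∘L Xp) ∘L T ∘L (Xp ∘L X) = T := by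
  have hXXpX (u : E) : X (Xp (X u)) = X u := congrArg (· u) h1
  ext e
  have hker : e - Xp (X e) ∈ LinearMap.ker (X : E →ₗ[R] F) := by
    simp [LinearMap.mem_ker, hXXpX]
  obtain ⟨u, hu⟩ := hT _ hker
  have hTe : T e = X u + T (Xp (X e)) := by
    rw [← sub_eq_iff_eq_add, ← map_sub]
    exact hu.symm
  simp [hTe, hXXpX]

end ContinuousLinearMap

open ContinuousLinearMap in
theorem stmt_13_general {E F : Type*} [NormedAddCommGroup E] [NormedSpace ℝ E]
    [NormedAddCommGroup F] [NormedSpace ℝ F]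
    (X : E →L[ℝ] F) (Xp : F →L[ℝ] E)
    (h1 : X ∘L Xp ∘L X = X) :
    {T : E →L[ℝ] F | ∀ e ∈ LinearMap.ker (X : E →ₗ[ℝ] F), T e ∈ LinearMap.range (X : E →ₗ[ℝ] F)} =
      Set.range (fun T : E →L[ℝ] F =>
        (X ∘L Xp) ∘L T + ((1 : F →L[ℝ] F) - X ∘L Xp) ∘L T ∘L (Xp ∘L X)) := by
  ext T
  constructor
  · intro hT
    exact ⟨T, projection_sum_eq_self_of_mapsTo_ker_range h1 hT⟩
  · rintro ⟨S, rfl⟩ e he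
    exact apply_mem_range_of_mem_ker_projection_sum S he

theorem stmt_13 {E F : Type*} [NormedAddCommGroup E] [NormedSpace ℝ E] [CompleteSpace E]
    [NormedAddCommGroup F] [NormedSpace ℝ F] [CompleteSpace F]
    (X : E →L[ℝ] F) (Xp : F →L[ℝ] E) (hX : X ≠ 0)
    (h1 : X ∘L Xp ∘L X = X) (h2 : Xp ∘L X ∘L Xp = Xp) :
    {T : E →L[ℝ] F | ∀ e ∈ LinearMap.ker (X : E →ₗ[ℝ] F), T e ∈ LinearMap.range (X : E →ₗ[ℝ] F)} =
      Set.range (fun T : E →L[ℝ] F =>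
        (X ∘L Xp) ∘L T + ((1 : F →L[ℝ] F) - X ∘L Xp) ∘L T ∘L (Xp ∘L X)) :=
  stmt_13_general X Xp h1
end

section
/- Let X ∈ B(E,F) be nonzero with generalized inverse X⁺. Then B(E,F) = M(X) ⊕ E_X, where M(X) = {T : T N(X) ⊆ R(X)} and E_X = { T ∈ B(E,F) : R(T) ⊆ N(X⁺) and N(T) ⊇ R(X⁺) }; that is, E_X is a complement of M(X) in B(E,F). -/
/-!
With `P = X X⁺` and `Q = X⁺ X`, every `T` splits as `T = (T - B) + B` with
`B = (1 - P) T (1 - Q)`. The operator `T - B` agrees with `P T` on `N(X)`, so it lies in `M(X)`,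
and `X⁺ X X⁺ = X⁺` kills `B` on both sides, so `B ∈ E_X`. Conversely, an operator in both
subspaces maps `e` to `T (1 - Q) e ∈ R(X)`, which `X⁺` annihilates; on `R(X)` the map `X⁺` is
injective because `X X⁺ X = X`.
-/

/-- The subspace `M(X) = {T : T (N(X)) ⊆ R(X)}` of `B(E,F)`. -/
def MX {E F : Type*} [NormedAddCommGroup E] [NormedSpace ℝ E]
    [NormedAddCommGroup F] [NormedSpace ℝ F]
    (X : E →L[ℝ] F) : Submodule ℝ (E →L[ℝ] F) where
  carrier := {T | ∀ e ∈ LinearMap.ker (X : E →ₗ[ℝ] F), T e ∈ LinearMap.range (X : E →ₗ[ℝ] F)}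
  add_mem' := fun ha hb e he => by
    simpa using add_mem (ha e he) (hb e he)
  zero_mem' := fun e _ => by simp
  smul_mem' := fun c _ ha e he => by
    simpa using Submodule.smul_mem _ c (ha e he)

/-- The subspace `E_X = {T : R(T) ⊆ N(X⁺), N(T) ⊇ R(X⁺)}` of `B(E,F)`. -/
def EX {E F : Type*} [NormedAddCommGroup E] [NormedSpace ℝ E]
    [NormedAddCommGroup F] [NormedSpace ℝ F]
    (Xp : F →L[ℝ] E) : Submodule ℝ (E →L[ℝ] F) where
  carrier := {T | (∀ x : E, T x ∈ LinearMap.ker (Xp : F →ₗ[ℝ] E)) ∧ ∀ y : F, T (Xp y) = 0}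
  add_mem' := fun ha hb => by
    refine ⟨fun x => ?_, fun y => ?_⟩
    · simpa using add_mem (ha.1 x) (hb.1 x)
    · simp [ha.2 y, hb.2 y]
  zero_mem' := ⟨fun x => by simp, fun y => by simp⟩
  smul_mem' := fun c _ ha => by
    refine ⟨fun x => ?_, fun y => ?_⟩
    · simpa using Submodule.smul_mem _ c (ha.1 x)
    · simp [ha.2 y]

section GeneralizedInverse

variable {E F : Type*} [NormedAddCommGroup E] [NormedSpace ℝ E]
  [NormedAddCommGroup F] [NormedSpace ℝ F] {X : E →L[ℝ] F} {Xp : F →L[ℝ] E}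

lemma sub_compl_comp_compl_mem_MX (T : E →L[ℝ] F) :
    T - (1 - X ∘L Xp) ∘L T ∘L (1 - Xp ∘L X) ∈ MX X := by
  intro e he
  have hXe : X e = 0 := he
  refine ⟨Xp (T e), ?_⟩
  simp [hXe]

lemma compl_comp_compl_mem_EX (h2 : Xp ∘L X ∘L Xp = Xp) (T : E →L[ℝ] F) :
    (1 - X ∘L Xp) ∘L T ∘L (1 - Xp ∘L X) ∈ EX Xp := by
  have hXp : ∀ y, Xp (X (Xp y)) = Xp y := DFunLike.congr_fun h2
  refine ⟨fun x => ?_, fun y => ?_⟩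
  · simp [LinearMap.mem_ker, hXp]
  · simp [hXp]

lemma disjoint_MX_EX (h1 : X ∘L Xp ∘L X = X) : Disjoint (MX X) (EX Xp) := by
  have hX : ∀ e, X (Xp (X e)) = X e := DFunLike.congr_fun h1
  rw [Submodule.disjoint_def]
  rintro T hM ⟨hRange, hKer⟩
  ext e
  obtain ⟨u, hu⟩ := hM (e - Xp (X e)) (by simp [hX])
  have hTe : T e = X u := by
    simpa [hKer] using hu.symm
  have hXpXu : Xp (X u) = 0 := hTe ▸ hRange e
  calc T e = X (Xp (X u)) := by rw [hTe, hX]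
    _ = 0 := by rw [hXpXu, map_zero]

lemma codisjoint_MX_EX (h2 : Xp ∘L X ∘L Xp = Xp) : Codisjoint (MX X) (EX Xp) := by
  rw [codisjoint_iff, eq_top_iff]
  intro T _
  rw [← sub_add_cancel T ((1 - X ∘L Xp) ∘L T ∘L (1 - Xp ∘L X))]
  exact Submodule.add_mem_sup (sub_compl_comp_compl_mem_MX T) (compl_comp_compl_mem_EX h2 T)

end GeneralizedInverse

theorem stmt_14_general {E F : Type*} [NormedAddCommGroup E] [NormedSpace ℝ E]
    [NormedAddCommGroup F] [NormedSpace ℝ F]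
    (X : E →L[ℝ] F) (Xp : F →L[ℝ] E)
    (h1 : X ∘L Xp ∘L X = X) (h2 : Xp ∘L X ∘L Xp = Xp) :
    IsCompl (MX X) (EX Xp) :=
  ⟨disjoint_MX_EX h1, codisjoint_MX_EX h2⟩

theorem stmt_14 {E F : Type*} [NormedAddCommGroup E] [NormedSpace ℝ E] [CompleteSpace E]
    [NormedAddCommGroup F] [NormedSpace ℝ F] [CompleteSpace F]
    (X : E →L[ℝ] F) (Xp : F →L[ℝ] E) (hX : X ≠ 0)
    (h1 : X ∘L Xp ∘L X = X) (h2 : Xp ∘L X ∘L Xp = Xp) :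
    IsCompl (MX X) (EX Xp) :=
  stmt_14_general X Xp h1 h2
end

section
/- Let X ∈ B(E,F) have generalized inverse X⁺, and define P : B(E,F) → B(E,F) by P(T) = X X⁺ T + (I_F − X X⁺) T X⁺ X. Then P is a bounded projection (P² = P) with range M(X) = {T : T N(X) ⊆ R(X)} and kernel { T : R(T) ⊆ N(X⁺) and N(T) ⊇ R(X⁺) }. -/
/-!
Since `X X⁺ X = X`, both `Q = X X⁺` and `S = X⁺ X` are idempotent. Relative to them every operator
`T` splits into the four Peirce corners `Q T S`, `Q T (1 - S)`, `(1 - Q) T S`, `(1 - Q) T (1 - S)`,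
and `P` keeps the first three and discards the last. Hence `P` is idempotent, `P T = T` iff
`(1 - Q) T (1 - S) = 0`, i.e. `T` maps `N(S) = N(X)` into `R(Q) = R(X)`, and `P T = 0` iff
`Q T = 0` and `T S = 0`. Finally `X⁺ X X⁺ = X⁺` gives `N(X X⁺) = N(X⁺)` and `R(X⁺ X) = R(X⁺)`.
-/

open ContinuousLinearMap

section Peirce

variable {R E F : Type*} [CommRing R]
  [TopologicalSpace E] [AddCommGroup E] [Module R E]
  [TopologicalSpace F] [AddCommGroup F] [IsTopologicalAddGroup F] [Module R F]
  [ContinuousConstSMul R F]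

def peirceProj (Q : F →L[R] F) (S : E →L[R] E) : (E →L[R] F) →ₗ[R] (E →L[R] F) where
  toFun T := Q ∘L T + (1 - Q) ∘L T ∘L S
  map_add' T T' := by ext; simp; abel
  map_smul' c T := by ext; simp

@[simp]
theorem peirceProj_apply_apply (Q : F →L[R] F) (S : E →L[R] E) (T : E →L[R] F) (x : E) :
    peirceProj Q S T x = Q (T x) + (T (S x) - Q (T (S x))) := rfl

variable {Q : F →L[R] F} {S : E →L[R] E}

theorem isIdempotentElem_peirceProj (hQ : IsIdempotentElem Q) (hS : IsIdempotentElem S) :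
    IsIdempotentElem (peirceProj Q S) := by
  have hQ' : ∀ y, Q (Q y) = Q y := fun y => congr($hQ y)
  have hS' : ∀ x, S (S x) = S x := fun x => congr($hS x)
  ext T x
  simp [hQ', hS']

theorem peirceProj_eq_self_iff (hQ : IsIdempotentElem Q) (hS : IsIdempotentElem S)
    (T : E →L[R] F) :
    peirceProj Q S T = T ↔
      ∀ x ∈ LinearMap.ker (S : E →ₗ[R] E), T x ∈ LinearMap.range (Q : F →ₗ[R] F) := by
  have hQ' : ∀ y, Q (Q y) = Q y := fun y => congr($hQ y)
  have hS' : ∀ x, S (S x) = S x := fun x => congr($hS x)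
  constructor
  · intro hT x hx
    rw [LinearMap.mem_ker, coe_coe] at hx
    refine ⟨T x, ?_⟩
    simpa [hx] using congr($hT x)
  · intro hT
    ext x
    obtain ⟨y, hy⟩ := hT (x - S x) (by simp [hS'])
    have hfix : Q (T (x - S x)) = T (x - S x) := by
      rw [← hy]; exact hQ' y
    rw [map_sub, map_sub] at hfix
    rw [peirceProj_apply_apply, ← sub_eq_zero, ← sub_eq_zero.mpr hfix]
    abel

theorem peirceProj_eq_zero_iff (hQ : IsIdempotentElem Q) (T : E →L[R] F) :
    peirceProj Q S T = 0 ↔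
      (∀ x, T x ∈ LinearMap.ker (Q : F →ₗ[R] F)) ∧
        ∀ x ∈ LinearMap.range (S : E →ₗ[R] E), T x = 0 := by
  have hQ' : ∀ y, Q (Q y) = Q y := fun y => congr($hQ y)
  constructor
  · intro hT
    have hQT : ∀ x, Q (T x) = 0 := fun x => by simpa [hQ'] using congr(Q ($hT x))
    refine ⟨hQT, ?_⟩
    rintro _ ⟨x, rfl⟩
    simpa [hQT] using congr($hT x)
  · rintro ⟨hQT, hTS⟩
    ext x
    simp [show Q (T x) = 0 from hQT x, hTS (S x) ⟨x, rfl⟩]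

end Peirce

section InnerInverse

variable {R E F : Type*} [Semiring R]
  [TopologicalSpace E] [AddCommMonoid E] [Module R E]
  [TopologicalSpace F] [AddCommMonoid F] [Module R F]
  {A : E →L[R] F} {B : F →L[R] E}

theorem isIdempotentElem_comp_of_comp_comp_eq_self (h : A ∘L B ∘L A = A) :
    IsIdempotentElem (A ∘L B) := by
  change (A ∘L B ∘L A) ∘L B = A ∘L B
  rw [h]

theorem isIdempotentElem_comp_rev_of_comp_comp_eq_self (h : A ∘L B ∘L A = A) :
    IsIdempotentElem (B ∘L A) := by
  change B ∘L (A ∘L B ∘L A) = B ∘L A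
  rw [h]

theorem ker_comp_of_comp_comp_eq_self (h : A ∘L B ∘L A = A) :
    LinearMap.ker ((B ∘L A : E →L[R] E) : E →ₗ[R] E) = LinearMap.ker (A : E →ₗ[R] F) := by
  refine le_antisymm (fun x hx => ?_) (LinearMap.ker_le_ker_comp _ _)
  simp only [LinearMap.mem_ker, coe_coe, comp_apply] at hx ⊢
  rw [← h, comp_apply, comp_apply, hx, map_zero]

theorem range_comp_of_comp_comp_eq_self (h : A ∘L B ∘L A = A) :
    LinearMap.range ((A ∘L B : F →L[R] F) : F →ₗ[R] F) = LinearMap.range (A : E →ₗ[R] F) := by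
  refine le_antisymm (LinearMap.range_comp_le_range _ _) ?_
  rintro _ ⟨x, rfl⟩
  exact ⟨A x, by simpa using congr($h x)⟩

end InnerInverse

theorem stmt_15_general {E F : Type*} [NormedAddCommGroup E] [NormedSpace ℝ E]
    [NormedAddCommGroup F] [NormedSpace ℝ F]
    (X : E →L[ℝ] F) (Xp : F →L[ℝ] E)
    (h1 : X ∘L Xp ∘L X = X) (h2 : Xp ∘L X ∘L Xp = Xp)
    (P : (E →L[ℝ] F) → (E →L[ℝ] F))
    (hPdef : ∀ T, P T = (X ∘L Xp) ∘L T + ((1 : F →L[ℝ] F) - X ∘L Xp) ∘L T ∘L (Xp ∘L X)) :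
    (∀ a : ℝ, ∀ T S : E →L[ℝ] F, P (a • T + S) = a • P T + P S) ∧
    (∀ T, P (P T) = P T) ∧
    Set.range P = {T : E →L[ℝ] F | ∀ e ∈ LinearMap.ker (X : E →ₗ[ℝ] F), T e ∈ LinearMap.range (X : E →ₗ[ℝ] F)} ∧
    {T : E →L[ℝ] F | P T = 0} =
      {T : E →L[ℝ] F | (∀ x : E, T x ∈ LinearMap.ker (Xp : F →ₗ[ℝ] E)) ∧ ∀ y : F, T (Xp y) = 0} := by
  obtain rfl : P = peirceProj (X ∘L Xp) (Xp ∘L X) := funext hPdef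
  have hQ := isIdempotentElem_comp_of_comp_comp_eq_self h1
  have hS := isIdempotentElem_comp_rev_of_comp_comp_eq_self h1
  have hP := isIdempotentElem_peirceProj hQ hS
  refine ⟨fun a T S => by simp, fun T => congr($hP T), ?_, ?_⟩
  · ext T
    rw [Set.mem_ofPred_eq, ← ker_comp_of_comp_comp_eq_self h1,
      ← range_comp_of_comp_comp_eq_self h1, ← peirceProj_eq_self_iff hQ hS,
      ← LinearMap.IsIdempotentElem.mem_range_iff hP,
      LinearMap.mem_range, Set.mem_range]
  · ext T
    rw [Set.mem_ofPred_eq, Set.mem_ofPred_eq, peirceProj_eq_zero_iff hQ,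
      ker_comp_of_comp_comp_eq_self h2, range_comp_of_comp_comp_eq_self h2]
    simp only [LinearMap.mem_range, coe_coe, forall_exists_index, forall_apply_eq_imp_iff]

theorem stmt_15 {E F : Type*} [NormedAddCommGroup E] [NormedSpace ℝ E] [CompleteSpace E]
    [NormedAddCommGroup F] [NormedSpace ℝ F] [CompleteSpace F]
    (X : E →L[ℝ] F) (Xp : F →L[ℝ] E)
    (h1 : X ∘L Xp ∘L X = X) (h2 : Xp ∘L X ∘L Xp = Xp)
    (P : (E →L[ℝ] F) → (E →L[ℝ] F))
    (hPdef : ∀ T, P T = (X ∘L Xp) ∘L T + ((1 : F →L[ℝ] F) - X ∘L Xp) ∘L T ∘L (Xp ∘L X)) :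
    (∀ a : ℝ, ∀ T S : E →L[ℝ] F, P (a • T + S) = a • P T + P S) ∧
    (∀ T, P (P T) = P T) ∧
    Set.range P = {T : E →L[ℝ] F | ∀ e ∈ LinearMap.ker (X : E →ₗ[ℝ] F), T e ∈ LinearMap.range (X : E →ₗ[ℝ] F)} ∧
    {T : E →L[ℝ] F | P T = 0} =
      {T : E →L[ℝ] F | (∀ x : E, T x ∈ LinearMap.ker (Xp : F →ₗ[ℝ] E)) ∧ ∀ y : F, T (Xp y) = 0} :=
  stmt_15_general X Xp h1 h2 P hPdef
end

section
/- Let A ∈ B(E,F) have generalized inverse A⁺, and define D(X) = (X − A) A⁺ A + C_A(A⁺,X)⁻¹ X for X in V = { X ∈ B(E,F) : ‖(X−A)A⁺‖ < 1 }, where C_A(A⁺,X) = I_F + (X−A)A⁺. Then D is a bijection of V onto itself with inverse D⁻¹(T) = T A⁺ A + C_A(A⁺,T) T (I_E − A⁺A), and D(A) = A. -/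
open ContinuousLinearMap in
lemma stmt16_invfacts {F : Type*} [NormedAddCommGroup F] [NormedSpace ℝ F]
    [CompleteSpace F] (u : F →L[ℝ] F) (hu : ‖u‖ < 1) :
    (∀ y, Ring.inverse ((1 : F →L[ℝ] F) + u) (((1 : F →L[ℝ] F) + u) y) = y) ∧
    (∀ y, ((1 : F →L[ℝ] F) + u) (Ring.inverse ((1 : F →L[ℝ] F) + u) y) = y) := by
  set U : (F →L[ℝ] F)ˣ := Units.oneSub (-u) (by simpa using hu) with hUdef
  have hU : (U : F →L[ℝ] F) = 1 + u := by
    simp [hUdef, Units.oneSub, sub_neg_eq_add]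
  constructor <;> intro y
  · rw [← hU, Ring.inverse_unit, ← ContinuousLinearMap.mul_apply, U.inv_mul,
      ContinuousLinearMap.one_apply]
  · rw [← hU, Ring.inverse_unit, ← ContinuousLinearMap.mul_apply, U.mul_inv,
      ContinuousLinearMap.one_apply]

theorem stmt_16 {E F : Type*} [NormedAddCommGroup E] [NormedSpace ℝ E] [CompleteSpace E]
    [NormedAddCommGroup F] [NormedSpace ℝ F] [CompleteSpace F]
    (A : E →L[ℝ] F) (Ap : F →L[ℝ] E)
    (h1 : A ∘L Ap ∘L A = A) (h2 : Ap ∘L A ∘L Ap = Ap)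
    (V : Set (E →L[ℝ] F)) (hV : V = {X | ‖(X - A) ∘L Ap‖ < 1})
    (D Dinv : (E →L[ℝ] F) → (E →L[ℝ] F))
    (hD : ∀ X, D X =
      (X - A) ∘L (Ap ∘L A) + Ring.inverse ((1 : F →L[ℝ] F) + (X - A) ∘L Ap) ∘L X)
    (hDinv : ∀ T, Dinv T =
      T ∘L (Ap ∘L A) + ((1 : F →L[ℝ] F) + (T - A) ∘L Ap) ∘L T ∘L
        ((1 : E →L[ℝ] E) - Ap ∘L A)) :
    D A = A ∧ Set.MapsTo D V V ∧ Set.MapsTo Dinv V V ∧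
    (∀ X ∈ V, Dinv (D X) = X) ∧ (∀ T ∈ V, D (Dinv T) = T) := by
  have hA : ∀ e, A (Ap (A e)) = A e := by
    intro e
    have := ContinuousLinearMap.ext_iff.mp h1 e
    simpa using this
  have hAp : ∀ y, Ap (A (Ap y)) = Ap y := by
    intro y
    have := ContinuousLinearMap.ext_iff.mp h2 y
    simpa using this
  -- the inverse of C X applied to X (Ap y) gives A (Ap y), for X ∈ V
  have keyInv : ∀ X : E →L[ℝ] F, ‖(X - A) ∘L Ap‖ < 1 → ∀ y,
      Ring.inverse ((1 : F →L[ℝ] F) + (X - A) ∘L Ap) (X (Ap y)) = A (Ap y) := by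
    intro X hX y
    obtain ⟨hL, _⟩ := stmt16_invfacts ((X - A) ∘L Ap) hX
    have e1 : ((1 : F →L[ℝ] F) + (X - A) ∘L Ap) (A (Ap y)) = X (Ap y) := by
      simp [hAp]
    rw [← e1, hL]
  -- D X composed with Ap agrees with X composed with Ap
  have claim1 : ∀ X : E →L[ℝ] F, ‖(X - A) ∘L Ap‖ < 1 → ∀ y,
      D X (Ap y) = X (Ap y) := by
    intro X hX y
    rw [hD]
    simp only [ContinuousLinearMap.add_apply, ContinuousLinearMap.comp_apply,
      ContinuousLinearMap.sub_apply, hAp]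
    rw [keyInv X hX y]
    abel
  -- Dinv T composed with Ap agrees with T composed with Ap (no hypothesis needed)
  have claim2 : ∀ T : E →L[ℝ] F, ∀ y, Dinv T (Ap y) = T (Ap y) := by
    intro T y
    rw [hDinv]
    simp only [ContinuousLinearMap.add_apply, ContinuousLinearMap.comp_apply,
      ContinuousLinearMap.sub_apply, ContinuousLinearMap.one_apply, hAp, sub_self,
      map_zero, add_zero]
  have hDA : D A = A := by
    have hone : (1 : F →L[ℝ] F) + (A - A) ∘L Ap = 1 := by simp
    rw [hD, hone, Ring.inverse_one]
    ext e
    simp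
  refine ⟨hDA, ?_, ?_, ?_, ?_⟩
  · -- MapsTo D V V
    intro X hX
    rw [hV] at hX ⊢
    have h : (D X - A) ∘L Ap = (X - A) ∘L Ap := by
      ext y
      simp only [ContinuousLinearMap.comp_apply, ContinuousLinearMap.sub_apply,
        claim1 X hX]
    simp only [Set.mem_setOf_eq] at *
    rw [h]; exact hX
  · -- MapsTo Dinv V V
    intro T hT
    rw [hV] at hT ⊢
    have h : (Dinv T - A) ∘L Ap = (T - A) ∘L Ap := by
      ext y
      simp only [ContinuousLinearMap.comp_apply, ContinuousLinearMap.sub_apply,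
        claim2 T]
    simp only [Set.mem_setOf_eq] at *
    rw [h]; exact hT
  · -- left inverse : Dinv (D X) = X on V
    intro X hX
    rw [hV] at hX
    obtain ⟨hL, hR⟩ := stmt16_invfacts ((X - A) ∘L Ap) hX
    set Ci := Ring.inverse ((1 : F →L[ℝ] F) + (X - A) ∘L Ap) with hCi
    have F1 : ∀ z, D X (Ap z) = X (Ap z) := claim1 X hX
    have F2 : ∀ z, D X z = X (Ap (A z)) - A (Ap (A z)) + Ci (X z) := by
      intro z
      rw [hD]
      simp only [ContinuousLinearMap.add_apply, ContinuousLinearMap.comp_apply,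
        ContinuousLinearMap.sub_apply, hCi]
    have F3 : ∀ z, Ci (X (Ap z)) = A (Ap z) := keyInv X hX
    have hYA : (D X - A) ∘L Ap = (X - A) ∘L Ap := by
      ext y
      simp only [ContinuousLinearMap.comp_apply, ContinuousLinearMap.sub_apply, F1]
    ext e
    rw [hDinv, hYA]
    simp only [ContinuousLinearMap.add_apply, ContinuousLinearMap.comp_apply,
      ContinuousLinearMap.sub_apply, ContinuousLinearMap.one_apply, map_sub, map_add]
    simp only [F1]
    simp only [F2]
    simp only [map_sub, map_add, hAp, hA, F3]
    have hq : Ci (X e) + (X (Ap (Ci (X e))) - A (Ap (Ci (X e)))) = X e := by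
      have := hR (X e)
      simpa [hCi] using this
    conv_rhs => rw [← hq]
    abel
  · -- right inverse : D (Dinv T) = T on V
    intro T hT
    rw [hV] at hT
    obtain ⟨hL, hR⟩ := stmt16_invfacts ((T - A) ∘L Ap) hT
    have G1 : ∀ z, Dinv T (Ap z) = T (Ap z) := claim2 T
    have hYA : (Dinv T - A) ∘L Ap = (T - A) ∘L Ap := by
      ext y
      simp only [ContinuousLinearMap.comp_apply, ContinuousLinearMap.sub_apply, G1]
    ext e
    rw [hD, hYA]
    simp only [ContinuousLinearMap.add_apply, ContinuousLinearMap.comp_apply,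
      ContinuousLinearMap.sub_apply, ContinuousLinearMap.one_apply]
    rw [G1 (A e)]
    have hw : Dinv T e =
        ((1 : F →L[ℝ] F) + (T - A) ∘L Ap) (A (Ap (A e)) + T (e - Ap (A e))) := by
      rw [hDinv]
      simp only [ContinuousLinearMap.add_apply, ContinuousLinearMap.comp_apply,
        ContinuousLinearMap.sub_apply, ContinuousLinearMap.one_apply, map_sub, map_add,
        hAp]
      abel
    rw [hw, hL]
    simp only [map_sub, map_add, hA]
    abel
end

section
/- Let A ∈ B(E,F) have generalized inverse A⁺ and let X ∈ B(E,F) with ‖(X−A)A⁺‖ < 1. Then C_A(A⁺, D(X)) = C_A(A⁺, X), where D(X) = (X−A)A⁺A + C_A(A⁺,X)⁻¹X and C_A(A⁺,Y) = I_F + (Y−A)A⁺; equivalently (D(X) − A)A⁺ = (X − A)A⁺. -/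
theorem stmt_17 {E F : Type*} [NormedAddCommGroup E] [NormedSpace ℝ E] [CompleteSpace E]
    [NormedAddCommGroup F] [NormedSpace ℝ F] [CompleteSpace F]
    (A X : E →L[ℝ] F) (Ap : F →L[ℝ] E)
    (h1 : A ∘L Ap ∘L A = A) (h2 : Ap ∘L A ∘L Ap = Ap)
    (hX : ‖(X - A) ∘L Ap‖ < 1) :
    (((X - A) ∘L (Ap ∘L A) + Ring.inverse ((1 : F →L[ℝ] F) + (X - A) ∘L Ap) ∘L X) - A)
        ∘L Ap = (X - A) ∘L Ap ∧
    (1 : F →L[ℝ] F) +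
        (((X - A) ∘L (Ap ∘L A) + Ring.inverse ((1 : F →L[ℝ] F) + (X - A) ∘L Ap) ∘L X) - A)
          ∘L Ap =
      (1 : F →L[ℝ] F) + (X - A) ∘L Ap := by
  set u : F →L[ℝ] F := (X - A) ∘L Ap with hu
  have hunit : IsUnit ((1 : F →L[ℝ] F) + u) := by
    have : ‖-u‖ < 1 := by rwa [norm_neg]
    have := (Units.oneSub (-u) this).isUnit
    simpa [sub_neg_eq_add] using this
  have hinv : Ring.inverse ((1 : F →L[ℝ] F) + u) * ((1 : F →L[ℝ] F) + u) = 1 :=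
    Ring.inverse_mul_cancel _ hunit
  -- key: (1+u) ∘ (A ∘ Ap) = X ∘ Ap
  have hApAAp : Ap ∘L (A ∘L Ap) = Ap := by
    rw [← ContinuousLinearMap.comp_assoc]; exact h2
  have hkey : ((1 : F →L[ℝ] F) + u) ∘L (A ∘L Ap) = X ∘L Ap := by
    rw [ContinuousLinearMap.add_comp, ContinuousLinearMap.one_def,
      ContinuousLinearMap.id_comp, hu, ContinuousLinearMap.comp_assoc, hApAAp,
      ContinuousLinearMap.sub_comp]
    abel
  have hc : Ring.inverse ((1 : F →L[ℝ] F) + u) ∘L ((1 : F →L[ℝ] F) + u) = 1 := hinv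
  have hCinv : Ring.inverse ((1 : F →L[ℝ] F) + u) ∘L (X ∘L Ap) = A ∘L Ap := by
    rw [← hkey, ← ContinuousLinearMap.comp_assoc, hc, ContinuousLinearMap.one_def,
      ContinuousLinearMap.id_comp]
  have hmain : (((X - A) ∘L (Ap ∘L A) + Ring.inverse ((1 : F →L[ℝ] F) + u) ∘L X) - A)
      ∘L Ap = u := by
    rw [ContinuousLinearMap.sub_comp, ContinuousLinearMap.add_comp,
      ContinuousLinearMap.comp_assoc (X - A) (Ap ∘L A) Ap,
      ContinuousLinearMap.comp_assoc Ap A Ap, hApAAp,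
      ContinuousLinearMap.comp_assoc _ X Ap, hCinv, hu]
    abel
  exact ⟨hmain, by rw [hmain]⟩
end

section
/- Let f : U ⊆ E → ℝ be a C¹ functional on an open set U of a Banach space E, and let S ⊆ U be a C¹ submanifold. If x₀ ∈ S is a local extremum of the restriction f|_S, then the tangent space T_{x₀}S is contained in the kernel of f'(x₀), i.e., f'(x₀) e = 0 for all e ∈ T_{x₀}S. -/
theorem stmt_18 {E : Type*} [NormedAddCommGroup E] [NormedSpace ℝ E] [CompleteSpace E]
    (U : Set E) (hU : IsOpen U) (f : E → ℝ) (f' : E → (E →L[ℝ] ℝ))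
    (hf : ∀ x ∈ U, HasFDerivAt f (f' x) x)
    (hf' : ContinuousOn f' U)
    (S : Set E) (hSU : S ⊆ U) (x₀ : E) (hx₀ : x₀ ∈ S)
    (hext : IsLocalExtrOn f S x₀) :
    ∀ v : E, (∃ c : ℝ → E, ContDiff ℝ 1 c ∧ (∀ t : ℝ, c t ∈ S) ∧ c 0 = x₀ ∧
        HasDerivAt c v 0) →
      f' x₀ v = 0 := by
  rintro v ⟨c, hc, hcS, hc0, hcv⟩
  subst hc0
  have htend : Filter.Tendsto c (nhds 0) (nhdsWithin (c 0) S) := by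
    rw [tendsto_nhdsWithin_iff]
    refine ⟨hc.continuous.tendsto 0, Filter.Eventually.of_forall hcS⟩
  have hext' : IsLocalExtr (f ∘ c) 0 := hext.comp_tendsto htend
  have hderiv : HasDerivAt (f ∘ c) (f' (c 0) v) 0 := by
    simpa using (hf (c 0) (hSU hx₀)).comp_hasDerivAt 0 hcv
  exact hext'.hasDerivAt_eq_zero hderiv
end
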